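/- Let (σ, A, a) be a substitution satisfying condition (C) that projects onto a primitive substitution (τ, B, b), and let σ' be a non-principal sub-substitution of σ. Then the dominant eigenvalue of σ' is strictly smaller than the dominant eigenvalue of τ. -/

import Mathlib

/-- Apply a substitution (given on letters) to a word. -/
def Subst.apply {A : Type*} (σ : A → List A) (w : List A) : List A := (w.map σ).flatten

/-- A substitution is primitive if some iterate maps every letter to a word containing
every letter. -/
def Primitive {A : Type*} (σ : A → List A) : Prop :=
  ∃ n : ℕ, 0 < n ∧ ∀ c d : A, d ∈ (Subst.apply σ)^[n] [c]

/-- Incidence matrix of a substitution. -/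
noncomputable def IncMat {A : Type*} [Fintype A] [DecidableEq A] (σ : A → List A) :
    Matrix A A ℝ := Matrix.of fun i j => ((σ j).count i : ℝ)

/-- Incidence matrix of the sub-substitution associated with the component `i` of the
partition `P`: apply `σ`, erase the letters outside the component, and count occurrences. -/
noncomputable def SubIncMat {A : Type*} [Fintype A] [DecidableEq A] {l : ℕ}
    (σ : A → List A) (P : A → Fin l) (i : Fin l) :
    Matrix {x // P x = i} {x // P x = i} ℝ :=
  Matrix.of fun r c => ((((σ c.1).filter (fun x => P x == i)).count r.1 : ℕ) : ℝ)

/-- `α` is the dominant (Perron) eigenvalue of the real matrix `M`. -/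
def IsDomEig {n : Type*} [Fintype n] [DecidableEq n] (M : Matrix n n ℝ) (α : ℝ) : Prop :=
  Module.End.HasEigenvalue (Matrix.toLin' M) α ∧
  ∀ μ : ℂ, Module.End.HasEigenvalue (Matrix.toLin' (M.map Complex.ofReal)) μ →
    ‖μ‖ ≤ α

/-- Condition (C) for a substitution `σ`, with respect to the partition of the alphabet given
by `P : A → Fin l` into primitive components (the principal ones being those of index `≥ q`),
with distinguished starting letters `st i` for each component. -/
def ConditionC {A : Type*} (σ : A → List A) {l : ℕ} (q : ℕ) (P : A → Fin l)
    (st : Fin l → A) : Prop :=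
  q + 1 ≤ l ∧ Function.Surjective P ∧ (∀ c : A, σ c ≠ []) ∧
  (∀ c d : A, d ∈ σ c → P c ≤ P d) ∧
  (∀ i : Fin l, (i : ℕ) < q →
    (∀ c d : A, P c = i → P d = i → d ∉ σ c) ∨ (∀ c d : A, P c = i → P d = i → d ∈ σ c)) ∧
  (∀ i : Fin l, q ≤ (i : ℕ) → ∀ c d : A, P c = i → P d = i → d ∈ σ c) ∧
  (∀ c d : A, q ≤ ((P c) : ℕ) → q ≤ ((P d) : ℕ) → P c ≠ P d → d ∉ σ c) ∧
  (∀ i : Fin l, (i : ℕ) < q → ∃ c d : A, P c = i ∧ i < P d ∧ d ∈ σ c) ∧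
  (∀ i : Fin l, P (st i) = i) ∧
  (∀ i : Fin l, (i : ℕ) < q → (∃ c d : A, P c = i ∧ P d = i ∧ d ∈ σ c) →
    ((σ (st i)).filter (fun x => P x == i)).head? = some (st i)) ∧
  (∀ i : Fin l, q ≤ (i : ℕ) → ∃ u : List A, u ≠ [] ∧ σ (st i) = st i :: u)

/-!
Suppose `α ≤ β`. Since the block of `σ'` is strictly positive, the letter `c₀` occurs in
`σ'^(k+2)(c₀)` at least `|β| ^ k` times, and condition (C) lets us pick `c₀` so that `σ(c₀)`
contains a letter `d₀` outside the component. Every occurrence of `c₀` at time `k` emits a copy of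
`d₀`, whose image after `n - k` further steps has the length of `τ^(n-k)(ψ d₀)`, at least
`α ^ (n - k - 2N)` by primitivity of `τ`. Summing over `k`, `|σ^n(c₀)|` grows like `n α ^ n`.
But `|σ^n(c₀)| = |τ^n(ψ c₀)| ≤ α ^ (n + N)`: the minimal length at time `m` is at most `α ^ m`,
since minimal lengths are supermultiplicative and Gelfand's formula bounds their growth rate by the
spectral radius.
-/

open Finset

namespace Subst

variable {A B : Type*}

def iter (σ : A → List A) (n : ℕ) (c : A) : List A := (Subst.apply σ)^[n] [c]

variable (σ : A → List A)

lemma iterate_apply_eq_flatMap (n : ℕ) (w : List A) :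
    (Subst.apply σ)^[n] w = w.flatMap (iter σ n) := by
  induction n generalizing w with
  | zero => exact (List.flatMap_singleton' w).symm
  | succ n ih =>
    have h (c : A) : iter σ (n + 1) c = (σ c).flatMap (iter σ n) := by
      rw [iter, Function.iterate_succ_apply, ← ih]; simp [Subst.apply]
    rw [Function.iterate_succ_apply, ih, show Subst.apply σ w = w.flatMap σ from rfl,
      List.flatMap_assoc]
    exact congrArg (w.flatMap ·) (funext fun c => (h c).symm)

@[simp]
lemma iter_zero (c : A) : iter σ 0 c = [c] := rfl

lemma iter_add (m n : ℕ) (c : A) : iter σ (m + n) c = (iter σ n c).flatMap (iter σ m) := by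
  rw [iter, Function.iterate_add_apply, iterate_apply_eq_flatMap, iter]

lemma iter_succ (n : ℕ) (c : A) : iter σ (n + 1) c = (σ c).flatMap (iter σ n) := by
  rw [iter_add]; simp [iter, Subst.apply]

@[simp]
lemma iter_one (c : A) : iter σ 1 c = σ c := by
  rw [iter_succ]; exact List.flatMap_singleton' (σ c)

lemma length_iter_succ (n : ℕ) (c : A) :
    (iter σ (n + 1) c).length = ((σ c).map fun e => (iter σ n e).length).sum := by
  simp [iter_succ, List.length_flatMap]

lemma count_iter_succ [BEq A] (n : ℕ) (c d : A) :
    (iter σ (n + 1) c).count d = ((σ c).map fun e => (iter σ n e).count d).sum := by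
  simp [iter_succ, List.count_flatMap, Function.comp_def]

lemma length_iter_le_length_iter_add {m n : ℕ} {c d : A} (h : d ∈ iter σ n c) :
    (iter σ m d).length ≤ (iter σ (m + n) c).length := by
  rw [iter_add, List.length_flatMap]
  exact List.single_le_sum (fun _ _ => Nat.zero_le _) _ (List.mem_map_of_mem h)

lemma pow_le_length_iter_mul {m ℓ : ℕ} (hℓ : ∀ x, ℓ ≤ (iter σ m x).length) (k : ℕ) (x : A) :
    ℓ ^ k ≤ (iter σ (m * k) x).length := by
  induction k generalizing x with
  | zero => simp
  | succ k ih =>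
    rw [Nat.mul_succ, iter_add, List.length_flatMap, pow_succ', ← smul_eq_mul]
    calc ℓ • ℓ ^ k ≤ (iter σ m x).length • ℓ ^ k := Nat.mul_le_mul_right _ (hℓ x)
      _ = (((iter σ m x).map fun e => (iter σ (m * k) e).length)).length • ℓ ^ k := by simp
      _ ≤ _ := List.card_nsmul_le_sum _ _ (by simpa using fun e _ => ih e)

lemma length_iter_eq_of_map_comp {τ : B → List B} {ψ : A → B}
    (hψ : ∀ c, (σ c).map ψ = τ (ψ c)) (n : ℕ) (c : A) :
    (iter σ n c).length = (iter τ n (ψ c)).length := by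
  suffices (iter σ n c).map ψ = iter τ n (ψ c) by rw [← this, List.length_map]
  induction n generalizing c with
  | zero => rfl
  | succ n ih => simp [iter_succ, List.map_flatMap, ih, ← hψ, List.flatMap_map]

end Subst

namespace Matrix

open scoped Matrix.Norms.Operator
open Filter

variable {n : Type*} [Fintype n]

lemma sum_sum_le_mul_mul_apply {X Y Z : Matrix n n ℝ} (hX : ∀ i j, 1 ≤ X i j)
    (hY : ∀ i j, 0 ≤ Y i j) (hZ : ∀ i j, 1 ≤ Z i j) (i j : n) :
    ∑ k, ∑ l, Y k l ≤ (X * Y * Z) i j := by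
  simp only [mul_apply, sum_mul]
  rw [sum_comm]
  refine sum_le_sum fun k _ => sum_le_sum fun l _ => ?_
  calc Y k l = 1 * Y k l * 1 := by ring
    _ ≤ X i k * Y k l * Z l j :=
      mul_le_mul (mul_le_mul_of_nonneg_right (hX i k) (hY k l)) (hZ l j) zero_le_one
        (mul_nonneg (zero_le_one.trans (hX i k)) (hY k l))

lemma norm_apply_le_linfty_opNorm {R : Type*} [SeminormedAddCommGroup R] (M : Matrix n n R)
    (i j : n) : ‖M i j‖ ≤ ‖M‖ := by
  rw [linfty_opNorm_def]
  exact_mod_cast (single_le_sum (f := fun j => ‖M i j‖₊) (fun _ _ => zero_le) (mem_univ j)).trans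
    (le_sup (f := fun i => ∑ j, ‖M i j‖₊) (mem_univ i))

variable [DecidableEq n]

lemma abs_pow_le_sum_pow_apply {M : Matrix n n ℝ} (hM : ∀ i j, 0 ≤ M i j) {μ : ℝ}
    (hμ : Module.End.HasEigenvalue (toLin' M) μ) (k : ℕ) :
    |μ| ^ k ≤ ∑ i, ∑ j, (M ^ k) i j := by
  obtain ⟨v, hv⟩ := hμ.exists_hasEigenvector
  have hpow : (M ^ k) *ᵥ v = μ ^ k • v := by
    simpa [← toLin'_pow, toLin'_apply] using hv.pow_apply k
  obtain ⟨i₀, hi₀⟩ := Function.ne_iff.1 hv.2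
  obtain ⟨i, -, hi⟩ := exists_max_image univ (fun j => |v j|) ⟨i₀, mem_univ _⟩
  have hvi : 0 < |v i| := (abs_pos.2 hi₀).trans_le (hi i₀ (mem_univ _))
  have hMk := pow_apply_nonneg hM k
  have hrow : |μ| ^ k * |v i| ≤ (∑ j, (M ^ k) i j) * |v i| :=
    calc |μ| ^ k * |v i| = |((M ^ k) *ᵥ v) i| := by simp [hpow, abs_mul, abs_pow]
      _ ≤ ∑ j, (M ^ k) i j * |v j| := by
        simpa [mulVec, dotProduct, abs_mul, abs_of_nonneg (hMk i _)] using
          abs_sum_le_sum_abs (fun j => (M ^ k) i j * v j) univ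
      _ ≤ ∑ j, (M ^ k) i j * |v i| :=
        sum_le_sum fun j _ => mul_le_mul_of_nonneg_left (hi j (mem_univ _)) (hMk i j)
      _ = (∑ j, (M ^ k) i j) * |v i| := (sum_mul _ _ _).symm
  calc |μ| ^ k ≤ ∑ j, (M ^ k) i j := le_of_mul_le_mul_right hrow hvi
    _ ≤ ∑ i, ∑ j, (M ^ k) i j :=
      single_le_sum (f := fun i => ∑ j, (M ^ k) i j)
        (fun i _ => sum_nonneg fun j _ => hMk i j) (mem_univ i)

lemma eventually_pow_apply_le {M : Matrix n n ℝ} {r : ℝ}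
    (hρ : spectralRadius ℂ (M.map Complex.ofReal) < ENNReal.ofReal r) :
    ∀ᶠ k in atTop, ∀ i j, (M ^ k) i j ≤ r ^ k := by
  have hr : 0 < r := ENNReal.ofReal_pos.1 (zero_le.trans_lt hρ)
  set Mc := M.map Complex.ofRealHom
  filter_upwards [(spectrum.pow_norm_pow_one_div_tendsto_nhds_spectralRadius Mc).eventually_lt_const
    hρ, eventually_ge_atTop 1] with k hk hk1 i j
  rw [ENNReal.ofReal_lt_ofReal_iff hr, one_div,
    Real.rpow_inv_lt_iff_of_pos (norm_nonneg _) hr.le (by positivity), Real.rpow_natCast] at hk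
  calc (M ^ k) i j ≤ ‖(Mc ^ k) i j‖ := by
        rw [← Matrix.map_pow, map_apply, Complex.ofRealHom_eq_coe, Complex.norm_real]
        exact le_abs_self _
    _ ≤ r ^ k := (norm_apply_le_linfty_opNorm _ i j).trans hk.le

end Matrix

namespace IsDomEig

variable {n : Type*} [Fintype n] [DecidableEq n] {M : Matrix n n ℝ} {α : ℝ}

lemma nonneg (h : IsDomEig M α) : 0 ≤ α := by
  obtain ⟨v, hv⟩ := h.1.exists_hasEigenvector
  have hvc : Module.End.HasEigenvector (Matrix.toLin' (M.map Complex.ofReal)) α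
      (Complex.ofReal ∘ v) := by
    refine ⟨Module.End.mem_eigenspace_iff.2 (funext fun i => ?_), fun h0 => hv.2 ?_⟩
    · have := congrFun hv.apply_eq_smul i
      rw [Matrix.toLin'_apply] at this ⊢
      rw [← show Complex.ofReal (M.mulVec v i)
          = (M.map Complex.ofReal).mulVec (Complex.ofReal ∘ v) i
        from Complex.ofRealHom.map_mulVec M v i, this]
      simp
    · exact funext fun i => by simpa using congrFun h0 i
  exact (abs_nonneg α).trans <| by
    simpa using h.2 α (Module.End.hasEigenvalue_of_hasEigenvector hvc)

lemma spectralRadius_le (h : IsDomEig M α) :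
    spectralRadius ℂ (M.map Complex.ofReal) ≤ ENNReal.ofReal α :=
  iSup₂_le fun μ hμ => by
    rw [← Matrix.spectrum_toLin', ← Module.End.hasEigenvalue_iff_mem_spectrum] at hμ
    rw [← enorm_eq_nnnorm, ← ofReal_norm]
    exact ENNReal.ofReal_le_ofReal (h.2 μ hμ)

end IsDomEig

namespace Subst

section IncidenceMatrix

variable {A : Type*} [Fintype A] [DecidableEq A] (σ : A → List A)

lemma incMat_pow_apply (n : ℕ) (d c : A) : (IncMat σ ^ n) d c = (iter σ n c).count d := by
  induction n generalizing c with
  | zero => by_cases h : d = c <;> simp [h, Ne.symm]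
  | succ n ih =>
    rw [pow_succ, Matrix.mul_apply, count_iter_succ, Nat.cast_list_sum, List.map_map,
      Finset.sum_list_map_count, ← Finset.sum_subset (subset_univ _)]
    · refine Finset.sum_congr rfl fun e _ => ?_
      rw [ih, IncMat, Matrix.of_apply, nsmul_eq_mul, mul_comm]; rfl
    · intro e _ he
      simp [IncMat, List.count_eq_zero_of_not_mem (by simpa using he)]

lemma sum_incMat_pow_apply (n : ℕ) (c : A) :
    ∑ d, (IncMat σ ^ n) d c = (iter σ n c).length := by
  simp_rw [incMat_pow_apply]
  have := Multiset.sum_count_eq_card (s := univ) (m := (iter σ n c : Multiset A))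
    (fun _ _ => mem_univ _)
  simp only [Multiset.coe_count, Multiset.coe_card] at this
  exact_mod_cast this

lemma abs_pow_le_count_iter {N : ℕ} (hN : ∀ c d, d ∈ iter σ N c) {μ : ℝ}
    (hμ : Module.End.HasEigenvalue (Matrix.toLin' (IncMat σ)) μ) (k : ℕ) (c d : A) :
    |μ| ^ k ≤ (iter σ (k + 2 * N) c).count d := by
  have hone : ∀ i j, 1 ≤ (IncMat σ ^ N) i j := fun i j => by
    rw [incMat_pow_apply]; exact_mod_cast List.count_pos_iff.2 (hN j i)
  have hnonneg : ∀ i j, 0 ≤ IncMat σ i j := fun i j => Nat.cast_nonneg _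
  rw [← incMat_pow_apply, show k + 2 * N = N + k + N by ring, pow_add, pow_add]
  exact (Matrix.abs_pow_le_sum_pow_apply hnonneg hμ k).trans
    (Matrix.sum_sum_le_mul_mul_apply hone (Matrix.pow_apply_nonneg hnonneg k) hone d c)

end IncidenceMatrix

section GrowthUpperBound

open Filter

variable {B : Type*} [Fintype B] [DecidableEq B] {τ : B → List B} {α : ℝ}

lemma eventually_length_iter_le {r : ℝ}
    (hρ : spectralRadius ℂ ((IncMat τ).map Complex.ofReal) < ENNReal.ofReal r) :
    ∀ᶠ k in atTop, ∀ c, ((iter τ k c).length : ℝ) ≤ Fintype.card B * r ^ k := by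
  filter_upwards [Matrix.eventually_pow_apply_le hρ] with k hk c
  rw [← sum_incMat_pow_apply]
  simpa using sum_le_sum fun d (_ : d ∈ univ) => hk d c

lemma exists_length_iter_le_pow [Nonempty B]
    (hρ : spectralRadius ℂ ((IncMat τ).map Complex.ofReal) ≤ ENNReal.ofReal α) (hα : 0 ≤ α)
    (m : ℕ) :
    ∃ x, ((iter τ m x).length : ℝ) ≤ α ^ m := by
  obtain ⟨x, hx⟩ := Finite.exists_min fun x => (iter τ m x).length
  refine ⟨x, le_of_not_gt fun hlt => ?_⟩
  set ℓ := (iter τ m x).length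
  rcases Nat.eq_zero_or_pos m with rfl | hm
  · simp [ℓ] at hlt
  obtain ⟨r, hrm, hαr : α < r⟩ : ∃ r : ℝ, r ^ m < ℓ ∧ r ∈ Set.Ioi α :=
    ((((continuous_pow m).tendsto α).eventually (gt_mem_nhds hlt)).filter_mono
      nhdsWithin_le_nhds |>.and (self_mem_nhdsWithin (s := Set.Ioi α))).exists
  have hr : 0 < r := hα.trans_lt hαr
  have hq : 1 < ℓ / r ^ m := (one_lt_div (by positivity)).2 hrm
  obtain ⟨n₀, hn₀⟩ := eventually_atTop.1
    (eventually_length_iter_le (hρ.trans_lt ((ENNReal.ofReal_lt_ofReal_iff hr).2 hαr)))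
  obtain ⟨k, hk, hkn⟩ := ((tendsto_pow_atTop_atTop_of_one_lt hq).eventually_gt_atTop
    (Fintype.card B : ℝ) |>.and (eventually_ge_atTop n₀)).exists
  rw [div_pow, lt_div_iff₀ (by positivity), ← pow_mul] at hk
  have hsuper : (ℓ : ℝ) ^ k ≤ (iter τ (m * k) x).length := by
    exact_mod_cast pow_le_length_iter_mul τ hx k x
  linarith [hn₀ _ (hkn.trans (Nat.le_mul_of_pos_left k hm)) x]

lemma length_iter_le_pow
    (hρ : spectralRadius ℂ ((IncMat τ).map Complex.ofReal) ≤ ENNReal.ofReal α)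
    {N : ℕ} (hN : ∀ c d, d ∈ iter τ N c) (hα : 0 ≤ α) (n : ℕ) (c : B) :
    ((iter τ n c).length : ℝ) ≤ α ^ (n + N) := by
  have : Nonempty B := ⟨c⟩
  obtain ⟨x, hx⟩ := exists_length_iter_le_pow hρ hα (n + N)
  exact le_trans (by exact_mod_cast length_iter_le_length_iter_add τ (hN x c)) hx

end GrowthUpperBound

section Restrict

variable {A : Type*} (σ : A → List A) (p : A → Prop) [DecidablePred p]

def restrict (c : {x // p x}) : List {x // p x} :=
  ((σ c).filter fun x => p x).attach.map fun e => ⟨e.1, by simpa using (List.mem_filter.1 e.2).2⟩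

lemma map_val_restrict (c : {x // p x}) :
    (restrict σ p c).map Subtype.val = (σ c).filter fun x => p x := by
  simp [restrict]

variable {σ p} in
lemma mem_restrict {c d : {x // p x}} : d ∈ restrict σ p c ↔ d.1 ∈ σ c := by
  rw [← List.mem_map_of_injective Subtype.val_injective, map_val_restrict]
  simp [d.2]

lemma subIncMat_eq_incMat_restrict [Fintype A] [DecidableEq A] {l : ℕ} (P : A → Fin l)
    (i : Fin l) : SubIncMat σ P i = IncMat (restrict σ fun x => P x = i) := by
  ext r c
  simp only [SubIncMat, IncMat, Matrix.of_apply, Bool.beq_eq_decide_eq]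
  rw [← map_val_restrict, List.count_map_of_injective _ _ Subtype.val_injective]
  convert rfl

variable [DecidableEq A] {σ p} {c₀ : {x // p x}} {d₀ : A}

lemma count_mul_length_add_sum_le_length_iter_succ (hd₀ : d₀ ∈ σ c₀) (hpd₀ : ¬ p d₀) (n : ℕ)
    (c : {x // p x}) :
    [c].count c₀ * (iter σ n d₀).length
      + ((restrict σ p c).map fun e => (iter σ n e.1).length).sum
      ≤ (iter σ (n + 1) c).length := by
  rw [length_iter_succ, ← List.sum_map_filter_add_sum_map_filter_not p, ← map_val_restrict,
    List.map_map, add_comm]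
  refine Nat.add_le_add_left ?_ _
  by_cases hc : c = c₀
  · subst hc
    simpa using List.single_le_sum (fun _ _ => Nat.zero_le _) _
      (List.mem_map_of_mem (f := fun e => (iter σ n e).length)
        (List.mem_filter.2 ⟨hd₀, by simpa using hpd₀⟩))
  · have hc' : (c : A) ≠ c₀ := fun h => hc (Subtype.ext h)
    simp [List.count_singleton, hc']

lemma sum_count_mul_length_le_length_iter_succ (hd₀ : d₀ ∈ σ c₀) (hpd₀ : ¬ p d₀) (n : ℕ)
    (c : {x // p x}) :
    ∑ k ∈ range (n + 1), (iter (restrict σ p) k c).count c₀ * (iter σ (n - k) d₀).length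
      ≤ (iter σ (n + 1) c).length := by
  induction n generalizing c with
  | zero =>
    refine le_trans ?_ (count_mul_length_add_sum_le_length_iter_succ hd₀ hpd₀ 0 c)
    simp
  | succ n ih =>
    refine le_trans ?_ (count_mul_length_add_sum_le_length_iter_succ hd₀ hpd₀ (n + 1) c)
    rw [sum_range_succ', add_comm]
    simp only [count_iter_succ, Nat.add_sub_add_right, Nat.sub_zero]
    refine Nat.add_le_add_left ?_ _
    simp_rw [← List.sum_map_mul_right]
    calc _ = ((restrict σ p c).map fun e => ∑ k ∈ range (n + 1),
            (iter (restrict σ p) k e).count c₀ * (iter σ (n - k) d₀).length).sum := by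
          simpa using (Multiset.sum_map_sum (s := range (n + 1))
            (m := (restrict σ p c : Multiset {x // p x}))).symm
      _ ≤ _ := List.sum_le_sum fun e _ => ih e

variable [Fintype A]

theorem succ_mul_pow_le_length_iter (hd₀ : d₀ ∈ σ c₀) (hpd₀ : ¬ p d₀)
    (hfull : ∀ c d : {x // p x}, d ∈ restrict σ p c) {β γ : ℝ}
    (hβ : Module.End.HasEigenvalue (Matrix.toLin' (IncMat (restrict σ p))) β)
    (hγ : 0 ≤ γ) (hγβ : γ ≤ |β|) {K : ℕ} (hK : ∀ j, γ ^ j ≤ (iter σ (j + K) d₀).length)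
    (t : ℕ) : (t + 1) * γ ^ t ≤ (iter σ (t + K + 3) c₀).length := by
  have hcount (k : ℕ) : γ ^ k ≤ (iter (restrict σ p) (k + 2) c₀).count c₀ := by
    refine (pow_le_pow_left₀ hγ hγβ k).trans (le_of_le_of_eq
      (abs_pow_le_count_iter (restrict σ p) (N := 1) (by simpa using hfull) hβ k c₀ c₀) ?_)
    -- the two sides count with different (but lawful) `BEq` instances on the subtype
    congr 2
    exact lawful_beq_subsingleton _ _
  set f : ℕ → ℝ := fun k =>
    (iter (restrict σ p) k c₀).count c₀ * (iter σ (t + K + 2 - k) d₀).length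
  calc (t + 1) * γ ^ t = ∑ j ∈ range (t + 1), γ ^ j * γ ^ (t - j) := by
        rw [sum_congr rfl fun j hj => by
          rw [← pow_add, Nat.add_sub_cancel' (mem_range_succ_iff.1 hj)]]
        simp
    _ ≤ ∑ j ∈ range (t + 1), f (2 + j) := by
        refine sum_le_sum fun j hj => ?_
        have hlen : t + K + 2 - (j + 2) = t - j + K := by
          have := mem_range_succ_iff.1 hj; omega
        simp only [f, hlen, add_comm 2 j]
        exact mul_le_mul (hcount j) (hK (t - j)) (by positivity) (by positivity)
    _ = ∑ k ∈ Ico 2 (t + 3), f k := (sum_Ico_eq_sum_range f 2 (t + 3)).symm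
    _ ≤ ∑ k ∈ range (t + K + 2 + 1), f k :=
        sum_le_sum_of_subset_of_nonneg (fun k hk => by simp at hk ⊢; omega)
          (fun k _ _ => by positivity)
    _ ≤ (iter σ (t + K + 2 + 1) c₀).length := by
        simp only [f]
        exact_mod_cast sum_count_mul_length_le_length_iter_succ hd₀ hpd₀ (t + K + 2) c₀

end Restrict

end Subst

theorem stmt11_general {A B : Type*} [Fintype A] [DecidableEq A] [Fintype B] [DecidableEq B]
    (σ : A → List A) (τ : B → List B)
    {l : ℕ} (q : ℕ) (P : A → Fin l) (st : Fin l → A)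
    (hC : ConditionC σ q P st)
    -- σ projects onto the primitive substitution τ via the letter-to-letter morphism ψ
    (ψ : A → B) (hψ : ∀ c : A, List.map ψ (σ c) = τ (ψ c))
    (hτprim : Primitive τ)
    -- σ' : the non-principal sub-substitution associated with a non-principal component i
    (i : Fin l) (hi : (i : ℕ) < q)
    -- whose diagonal block is nonzero
    (hMi : ∃ c d : A, P c = i ∧ P d = i ∧ d ∈ σ c)
    (α β : ℝ) (hα : IsDomEig (IncMat τ) α) (hβ : IsDomEig (SubIncMat σ P i) β) :
    β < α := by
  obtain ⟨-, -, -, -, hdich, -, -, hesc, -, -, -⟩ := hC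
  obtain ⟨N, hN, hτN⟩ := hτprim
  obtain ⟨c₀, d₀, hc₀, hd₀i, hd₀⟩ := hesc i hi
  have hblock : ∀ c d : {x // P x = i}, d ∈ Subst.restrict σ (fun x => P x = i) c := by
    obtain ⟨c', d', hc', hd', hcd'⟩ := hMi
    have hfull := (hdich i hi).resolve_left fun h => h c' d' hc' hd' hcd'
    exact fun c d => Subst.mem_restrict.2 (hfull _ _ c.2 d.2)
  have hlen := Subst.length_iter_eq_of_map_comp σ hψ
  have hupper (n : ℕ) : ((Subst.iter σ n c₀).length : ℝ) ≤ α ^ (n + N) := by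
    rw [hlen]; exact Subst.length_iter_le_pow hα.spectralRadius_le hτN hα.nonneg n _
  have hαpos : 0 < α := hα.nonneg.lt_of_ne fun h => by
    have h0 := hupper 0
    norm_num [← h, zero_pow hN.ne'] at h0
  have hd₀grow (j : ℕ) : α ^ j ≤ ((Subst.iter σ (j + 2 * N) d₀).length : ℝ) := by
    rw [hlen, ← abs_of_pos hαpos]
    exact (Subst.abs_pow_le_count_iter τ hτN hα.1 j _ (ψ d₀)).trans
      (by exact_mod_cast List.count_le_length)
  by_contra! hαβ
  have hlower := Subst.succ_mul_pow_le_length_iter (c₀ := ⟨c₀, hc₀⟩) hd₀ hd₀i.ne' hblock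
    (Subst.subIncMat_eq_incMat_restrict σ P i ▸ hβ.1) hαpos.le (hαβ.trans (le_abs_self β))
    hd₀grow
  obtain ⟨t, ht⟩ := exists_nat_gt (α ^ (3 * N + 3))
  have hsqueeze : (t + 1) * α ^ t ≤ α ^ (3 * N + 3) * α ^ t :=
    calc (t + 1) * α ^ t ≤ (Subst.iter σ (t + 2 * N + 3) c₀).length := hlower t
      _ ≤ α ^ (t + 2 * N + 3 + N) := hupper _
      _ = α ^ (3 * N + 3) * α ^ t := by ring
  linarith [le_of_mul_le_mul_right hsqueeze (pow_pos hαpos t)]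

theorem stmt11 {A B : Type*} [Fintype A] [DecidableEq A] [Fintype B] [DecidableEq B]
    (σ : A → List A) (τ : B → List B) (a : A) (b : B)
    {l : ℕ} (q : ℕ) (P : A → Fin l) (st : Fin l → A)
    (hC : ConditionC σ q P st)
    (hσa : ∃ u : List A, u ≠ [] ∧ σ a = a :: u) (hτb : ∃ u : List B, u ≠ [] ∧ τ b = b :: u)
    -- σ projects onto the primitive substitution τ via the letter-to-letter morphism ψ
    (ψ : A → B) (hψa : ψ a = b) (hψ : ∀ c : A, List.map ψ (σ c) = τ (ψ c))
    (hτprim : Primitive τ)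
    -- σ' : the non-principal sub-substitution associated with a non-principal component i
    (i : Fin l) (hi : (i : ℕ) < q)
    -- whose diagonal block is nonzero
    (hMi : ∃ c d : A, P c = i ∧ P d = i ∧ d ∈ σ c)
    -- and different from the 1×1 matrix [1]
    (hMi1 : ¬ (Fintype.card {x // P x = i} = 1 ∧
      ∀ r c : {x // P x = i}, SubIncMat σ P i r c = 1))
    (α β : ℝ) (hα : IsDomEig (IncMat τ) α) (hβ : IsDomEig (SubIncMat σ P i) β) :
    β < α :=
  stmt11_general σ τ q P st hC ψ hψ hτprim i hi hMi α β hα hβ
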